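/- In the blowup model, suppose Λ has the upper density bound (κ, A_κ) for some constants κ, A_κ > 0. Then there is a constant c > 0, depending only on κ, A_κ and α_max, such that for all reals S > 0 and 0 < x < S, the section s_x exists for time at least c/S, i.e. t_max(x) ≥ c/S; explicitly, one may take c = A_κ·α_max^{−2κA_κ}, and moreover s_x(t) ≤ α_max^{2κA_κ}·S for all t < c/S. (This is the abstract content of the paper's Lemma: sections with small initial value survive for a proportionally long time.) -/
import Mathlib


/-!
STATEMENT 6: In the blowup model, if `Λ` has the upper density bound `(κ, A_κ)` then
there is a constant `c > 0` depending only on `κ`, `A_κ` and `αmax` — explicitly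
`c = A_κ · αmax^(−2κA_κ)` — such that for all `S > 0` and every initial value
`0 < x < S`, the section `s_x` exists for time at least `c/S`, i.e. `t_max x ≥ c/S`,
and moreover `s_x(t) ≤ αmax^(2κA_κ) · S` for all `t < c/S`.
-/

open scoped Classical

open Set in
/-- The blowup model: magnification bounds `1 < αmin ≤ αmax`, a set `Λ ⊆ (0,∞) × (0,∞)`
of singularities with distinct first coordinates which is finite in every box
`(0,T] × (0,H]`, and a magnification function `mag` taking values in `[αmin, αmax]`
on `Λ`. -/
structure BlowupModel where
  αmin : ℝ
  αmax : ℝ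
  one_lt_αmin : 1 < αmin
  αmin_le_αmax : αmin ≤ αmax
  Λ : Set (ℝ × ℝ)
  Λ_pos : ∀ p ∈ Λ, 0 < p.1 ∧ 0 < p.2
  Λ_inj : ∀ p ∈ Λ, ∀ q ∈ Λ, p.1 = q.1 → p = q
  Λ_locFin : ∀ T H : ℝ, (Λ ∩ Set.Ioc 0 T ×ˢ Set.Ioc 0 H).Finite
  mag : ℝ × ℝ → ℝ
  mag_mem : ∀ p ∈ Λ, αmin ≤ mag p ∧ mag p ≤ αmax

namespace BlowupModel

/-- The singularities that a section of current value `s` can hit after time `τ`. -/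
def eventSet (M : BlowupModel) (τ s : ℝ) : Set (ℝ × ℝ) :=
  {p | p ∈ M.Λ ∧ τ < p.1 ∧ p.2 < s}

/-- The singularity realizing the next event after time `τ` for a section of current
value `s` (the one with least time coordinate; junk value if there is none). -/
noncomputable def nextSing (M : BlowupModel) (τ s : ℝ) : ℝ × ℝ :=
  Classical.epsilon fun p => p ∈ M.eventSet τ s ∧ ∀ q ∈ M.eventSet τ s, p.1 ≤ q.1

/-- `evt M x n` is the pair (time of the `n`-th event, value of the section `s_x` just
after the `n`-th event), starting from `evt M x 0 = (0, x)`; at an event at the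
singularity `(t,b)` the value jumps from `s` to `b + mag (t,b) * (s - b)`.  If no
further event occurs, the pair is repeated forever. -/
noncomputable def evt (M : BlowupModel) (x : ℝ) : ℕ → ℝ × ℝ
  | 0 => (0, x)
  | n + 1 =>
    let τ := (evt M x n).1
    let s := (evt M x n).2
    if (M.eventSet τ s).Nonempty then
      ((M.nextSing τ s).1,
        (M.nextSing τ s).2 + M.mag (M.nextSing τ s) * (s - (M.nextSing τ s).2))
    else (τ, s)

/-- The blowup time of the section `s_x`: the supremum of the event times if there are
infinitely many events, and `∞` otherwise. -/
noncomputable def tmax (M : BlowupModel) (x : ℝ) : EReal :=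
  if ∀ n, (M.eventSet (M.evt x n).1 (M.evt x n).2).Nonempty then
    ⨆ n, ((M.evt x n).1 : EReal)
  else ⊤

/-- The value of the section `s_x` at time `t` (meaningful for `0 ≤ t < tmax x`): the
value just after the last event at time `≤ t`. -/
noncomputable def sx (M : BlowupModel) (x t : ℝ) : ℝ :=
  sSup ((fun n => (M.evt x n).2) '' {n | (M.evt x n).1 ≤ t})

end BlowupModel

/-- `Λ` has the upper density bound `(κ, A)`: every box `(t, t+w] × (0, h]` with
`t ≥ 0` and area `w·h ≥ A` contains at most `2κ·w·h` singularities. -/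
def BlowupModel.UpperDensityBound (M : BlowupModel) (κ A : ℝ) : Prop :=
  ∀ t : ℝ, 0 ≤ t → ∀ w h : ℝ, 0 < w → 0 < h → A ≤ w * h →
    ((M.Λ ∩ Set.Ioc t (t + w) ×ˢ Set.Ioc 0 h).ncard : ℝ) ≤ 2 * κ * w * h

namespace BlowupModel

variable (M : BlowupModel)

lemma nextSing_spec {τ s : ℝ} (h : (M.eventSet τ s).Nonempty) :
    M.nextSing τ s ∈ M.eventSet τ s ∧ ∀ q ∈ M.eventSet τ s, (M.nextSing τ s).1 ≤ q.1 := by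
  have hex : ∃ p, p ∈ M.eventSet τ s ∧ ∀ q ∈ M.eventSet τ s, p.1 ≤ q.1 := by
    obtain ⟨p, hp⟩ := h
    have hfin : (M.eventSet τ s ∩ {q | q.1 ≤ p.1}).Finite := by
      apply (M.Λ_locFin p.1 s).subset
      rintro q ⟨⟨hqΛ, hqτ, hqs⟩, hq1⟩
      exact ⟨hqΛ, ⟨(M.Λ_pos q hqΛ).1, hq1⟩, ⟨(M.Λ_pos q hqΛ).2, hqs.le⟩⟩
    have hne : (M.eventSet τ s ∩ {q | q.1 ≤ p.1}).Nonempty := ⟨p, hp, by simp⟩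
    obtain ⟨m, hm, hmin⟩ := Set.exists_min_image _ (fun q => q.1) hfin hne
    refine ⟨m, hm.1, fun q hq => ?_⟩
    by_cases hq1 : q.1 ≤ p.1
    · exact hmin q ⟨hq, hq1⟩
    · exact le_trans (hmin p ⟨hp, by simp⟩) (le_of_not_ge hq1)
  unfold nextSing
  exact Classical.epsilon_spec hex

/-- Number of genuine jumps among the first `n` steps. -/
noncomputable def J (M : BlowupModel) (x : ℝ) (n : ℕ) : ℕ :=
  ((Finset.range n).filter fun k =>
    (M.eventSet (M.evt x k).1 (M.evt x k).2).Nonempty).card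

lemma J_zero (x : ℝ) : M.J x 0 = 0 := by simp [J]

lemma J_succ_jump (x : ℝ) (n : ℕ)
    (h : (M.eventSet (M.evt x n).1 (M.evt x n).2).Nonempty) :
    M.J x (n + 1) = M.J x n + 1 := by
  simp [J, Finset.range_add_one, Finset.filter_insert, h]

lemma J_succ_nojump (x : ℝ) (n : ℕ)
    (h : ¬ (M.eventSet (M.evt x n).1 (M.evt x n).2).Nonempty) :
    M.J x (n + 1) = M.J x n := by
  simp [J, Finset.range_add_one, Finset.filter_insert, h]

lemma evt_succ_jump (x : ℝ) (n : ℕ)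
    (h : (M.eventSet (M.evt x n).1 (M.evt x n).2).Nonempty) :
    M.evt x (n + 1) =
      ((M.nextSing (M.evt x n).1 (M.evt x n).2).1,
        (M.nextSing (M.evt x n).1 (M.evt x n).2).2 +
          M.mag (M.nextSing (M.evt x n).1 (M.evt x n).2) *
            ((M.evt x n).2 - (M.nextSing (M.evt x n).1 (M.evt x n).2).2)) := by
  rw [evt]
  simp [h]

lemma evt_succ_nojump (x : ℝ) (n : ℕ)
    (h : ¬ (M.eventSet (M.evt x n).1 (M.evt x n).2).Nonempty) :
    M.evt x (n + 1) = M.evt x n := by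
  rw [evt]
  simp [h]

lemma αmax_pos : 0 < M.αmax :=
  lt_trans one_pos (lt_of_lt_of_le M.one_lt_αmin M.αmin_le_αmax)

lemma one_lt_αmax : 1 < M.αmax := lt_of_lt_of_le M.one_lt_αmin M.αmin_le_αmax

lemma evt_basic (x : ℝ) (hx : 0 < x) (n : ℕ) :
    0 ≤ (M.evt x n).1 ∧ 0 < (M.evt x n).2 ∧
      (M.evt x n).2 ≤ M.αmax ^ (M.J x n) * x := by
  induction n with
  | zero => simp [evt, J_zero, hx.le, hx]
  | succ n ih =>
    obtain ⟨ht, hv, hvb⟩ := ih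
    by_cases h : (M.eventSet (M.evt x n).1 (M.evt x n).2).Nonempty
    · obtain ⟨⟨hqΛ, hqτ, hqs⟩, -⟩ := M.nextSing_spec h
      set q := M.nextSing (M.evt x n).1 (M.evt x n).2 with hq
      have hb : 0 < q.2 := (M.Λ_pos q hqΛ).2
      have hα := M.mag_mem q hqΛ
      have hα1 : 1 ≤ M.mag q := le_trans M.one_lt_αmin.le hα.1
      rw [M.evt_succ_jump x n h, M.J_succ_jump x n h]
      refine ⟨?_, ?_, ?_⟩
      · exact le_trans ht hqτ.le
      · have : 0 ≤ M.mag q * ((M.evt x n).2 - q.2) := by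
          apply mul_nonneg (le_trans zero_le_one hα1) (sub_nonneg.2 hqs.le)
        simp only
        linarith
      · simp only
        have h1 : q.2 + M.mag q * ((M.evt x n).2 - q.2) ≤ M.αmax * (M.evt x n).2 := by
          nlinarith [hα.2, mul_le_mul_of_nonneg_right hα.2 (sub_nonneg.2 hqs.le),
            M.one_lt_αmax]
        calc q.2 + M.mag q * ((M.evt x n).2 - q.2) ≤ M.αmax * (M.evt x n).2 := h1
          _ ≤ M.αmax * (M.αmax ^ (M.J x n) * x) :=
              mul_le_mul_of_nonneg_left hvb M.αmax_pos.le
          _ = M.αmax ^ (M.J x n + 1) * x := by ring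
    · rw [M.evt_succ_nojump x n h, M.J_succ_nojump x n h]
      exact ⟨ht, hv, hvb⟩

lemma time_lt_succ_of_jump (x : ℝ) (n : ℕ)
    (h : (M.eventSet (M.evt x n).1 (M.evt x n).2).Nonempty) :
    (M.evt x n).1 < (M.evt x (n + 1)).1 := by
  obtain ⟨⟨-, hqτ, -⟩, -⟩ := M.nextSing_spec h
  rw [M.evt_succ_jump x n h]
  exact hqτ

lemma time_mono (x : ℝ) : Monotone fun n => (M.evt x n).1 := by
  apply monotone_nat_of_le_succ
  intro n
  by_cases h : (M.eventSet (M.evt x n).1 (M.evt x n).2).Nonempty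
  · exact (M.time_lt_succ_of_jump x n h).le
  · rw [M.evt_succ_nojump x n h]

end BlowupModel
namespace BlowupModel

lemma key (M : BlowupModel) (κ A : ℝ) (hκ : 0 < κ) (hA : 0 < A)
    (hub : M.UpperDensityBound κ A) (S x : ℝ) (hS : 0 < S) (hx : 0 < x) (hxS : x < S) :
    ∀ n : ℕ, (M.evt x n).1 < A * M.αmax ^ (-(2 * κ * A)) / S →
      ((M.J x n : ℝ)) ≤ 2 * κ * A := by
  intro n
  induction n using Nat.strong_induction_on with
  | _ n ih =>
    intro hn
    set E := 2 * κ * A with hE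
    set w := A * M.αmax ^ (-E) / S with hwdef
    set h := M.αmax ^ E * S with hhdef
    have hαp := M.αmax_pos
    have hEpos : 0 < M.αmax ^ E := Real.rpow_pos_of_pos hαp E
    have hEneg : 0 < M.αmax ^ (-E) := Real.rpow_pos_of_pos hαp (-E)
    have hw : 0 < w := by
      apply div_pos (mul_pos hA hEneg) hS
    have hh : 0 < h := mul_pos hEpos hS
    have hprod : M.αmax ^ (-E) * M.αmax ^ E = 1 := by
      rw [← Real.rpow_add hαp]; simp
    have hwh : w * h = A := by
      rw [hwdef, hhdef]
      calc A * M.αmax ^ (-E) / S * (M.αmax ^ E * S)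
          = A * (M.αmax ^ (-E) * M.αmax ^ E) * (S / S) := by ring
        _ = A := by rw [hprod, div_self hS.ne']; ring
    -- the jump singularities
    set g : ℕ → ℝ × ℝ := fun k => M.nextSing (M.evt x k).1 (M.evt x k).2 with hg
    set F : Finset ℕ := (Finset.range n).filter
      (fun k => (M.eventSet (M.evt x k).1 (M.evt x k).2).Nonempty) with hF
    have hgt : ∀ k, (M.eventSet (M.evt x k).1 (M.evt x k).2).Nonempty →
        (g k).1 = (M.evt x (k + 1)).1 := by
      intro k hk
      rw [hg, M.evt_succ_jump x k hk]
    have hmem : ∀ k ∈ F, k < n ∧ (M.eventSet (M.evt x k).1 (M.evt x k).2).Nonempty := by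
      intro k hk
      rw [hF, Finset.mem_filter, Finset.mem_range] at hk
      exact hk
    have hstrict : ∀ k ∈ F, ∀ k' ∈ F, k < k' → (g k).1 < (g k').1 := by
      intro k hk k' hk' hlt
      obtain ⟨hkn, hkj⟩ := hmem k hk
      obtain ⟨hk'n, hk'j⟩ := hmem k' hk'
      rw [hgt k hkj]
      calc (M.evt x (k + 1)).1 ≤ (M.evt x k').1 := M.time_mono x hlt
        _ < (M.evt x (k' + 1)).1 := M.time_lt_succ_of_jump x k' hk'j
        _ = (g k').1 := (hgt k' hk'j).symm
    have hinj : Set.InjOn g ↑F := by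
      intro k hk k' hk' hgkk'
      by_contra hne
      rcases lt_or_gt_of_ne hne with hlt | hlt
      · exact absurd (congrArg Prod.fst hgkk')
          (ne_of_lt (hstrict k (by exact_mod_cast hk) k' (by exact_mod_cast hk') hlt))
      · exact absurd (congrArg Prod.fst hgkk'.symm)
          (ne_of_lt (hstrict k' (by exact_mod_cast hk') k (by exact_mod_cast hk) hlt))
    have hcardF : (F.image g).card = M.J x n := by
      rw [Finset.card_image_of_injOn hinj, J]
    have hsub : ↑(F.image g) ⊆ M.Λ ∩ Set.Ioc (0:ℝ) (0 + w) ×ˢ Set.Ioc (0:ℝ) h := by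
      intro q hq
      rw [Finset.coe_image] at hq
      obtain ⟨k, hk, rfl⟩ := hq
      obtain ⟨hkn, hkj⟩ := hmem k hk
      obtain ⟨⟨hqΛ, hqτ, hqs⟩, -⟩ := M.nextSing_spec hkj
      refine ⟨hqΛ, ⟨(M.Λ_pos _ hqΛ).1, ?_⟩, ⟨(M.Λ_pos _ hqΛ).2, ?_⟩⟩
      · -- time bound
        rw [zero_add]
        calc (g k).1 = (M.evt x (k + 1)).1 := hgt k hkj
          _ ≤ (M.evt x n).1 := M.time_mono x hkn
          _ ≤ w := hn.le
      · -- value bound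
        have hkw : (M.evt x k).1 < w := lt_of_le_of_lt (M.time_mono x hkn.le) hn
        have hJk : ((M.J x k : ℝ)) ≤ E := ih k hkn hkw
        have hvb := (M.evt_basic x hx k).2.2
        have hpow : (M.αmax : ℝ) ^ (M.J x k) ≤ M.αmax ^ E := by
          rw [← Real.rpow_natCast M.αmax (M.J x k)]
          exact Real.rpow_le_rpow_of_exponent_le M.one_lt_αmax.le hJk
        calc (g k).2 ≤ (M.evt x k).2 := hqs.le
          _ ≤ M.αmax ^ (M.J x k) * x := hvb
          _ ≤ M.αmax ^ E * x := mul_le_mul_of_nonneg_right hpow hx.le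
          _ ≤ M.αmax ^ E * S := mul_le_mul_of_nonneg_left hxS.le hEpos.le
          _ = h := rfl
    have hfin : (M.Λ ∩ Set.Ioc (0:ℝ) (0 + w) ×ˢ Set.Ioc (0:ℝ) h).Finite :=
      M.Λ_locFin (0 + w) h
    have hle : (Finset.image g F).card ≤
        (M.Λ ∩ Set.Ioc (0:ℝ) (0 + w) ×ˢ Set.Ioc (0:ℝ) h).ncard := by
      rw [← Set.ncard_coe_finset (Finset.image g F)]
      exact Set.ncard_le_ncard hsub hfin
    rw [← hcardF] at *
    have hcard : (((Finset.image g F).card : ℕ) : ℝ) ≤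
        ((M.Λ ∩ Set.Ioc (0:ℝ) (0 + w) ×ˢ Set.Ioc (0:ℝ) h).ncard : ℝ) :=
      Nat.cast_le.mpr hle
    calc (((Finset.image g F).card : ℕ) : ℝ)
        ≤ ((M.Λ ∩ Set.Ioc (0:ℝ) (0 + w) ×ˢ Set.Ioc (0:ℝ) h).ncard : ℝ) := hcard
      _ ≤ 2 * κ * w * h := hub 0 le_rfl w h hw hh (le_of_eq hwh.symm)
      _ = 2 * κ * A := by rw [show 2 * κ * w * h = 2 * κ * (w * h) by ring, hwh]

end BlowupModel

theorem statement6 (M : BlowupModel) (κ A : ℝ) (hκ : 0 < κ) (hA : 0 < A)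
    (hub : M.UpperDensityBound κ A) :
    ∃ c : ℝ, 0 < c ∧ c = A * M.αmax ^ (-(2 * κ * A)) ∧
      ∀ S x : ℝ, 0 < S → 0 < x → x < S →
        ((c / S : ℝ) : EReal) ≤ M.tmax x ∧
          ∀ t : ℝ, 0 ≤ t → t < c / S → M.sx x t ≤ M.αmax ^ (2 * κ * A) * S := by
  have hαp := M.αmax_pos
  refine ⟨A * M.αmax ^ (-(2 * κ * A)),
    mul_pos hA (Real.rpow_pos_of_pos hαp _), rfl, ?_⟩
  intro S x hS hx hxS
  set c := A * M.αmax ^ (-(2 * κ * A)) with hc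
  constructor
  · -- tmax bound
    rw [BlowupModel.tmax]
    split_ifs with hall
    · by_contra hlt
      push_neg at hlt
      have hall' : ∀ n : ℕ, (M.evt x n).1 < c / S := by
        intro n
        have h1 : ((M.evt x n).1 : EReal) ≤ ⨆ m, ((M.evt x m).1 : EReal) :=
          le_iSup (fun m => ((M.evt x m).1 : EReal)) n
        have h2 : ((M.evt x n).1 : EReal) < ((c / S : ℝ) : EReal) :=
          lt_of_le_of_lt h1 hlt
        exact_mod_cast h2
      have hJn : ∀ n : ℕ, M.J x n = n := by
        intro n
        rw [BlowupModel.J, Finset.filter_true_of_mem (fun k _ => hall k)]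
        exact Finset.card_range n
      obtain ⟨n, hn⟩ := exists_nat_gt (2 * κ * A)
      have := M.key κ A hκ hA hub S x hS hx hxS n (hall' n)
      rw [hJn n] at this
      exact absurd this (not_le.mpr hn)
    · exact le_top
  · -- value bound
    intro t ht htlt
    rw [BlowupModel.sx]
    apply csSup_le
    · refine ⟨x, ⟨0, ?_, rfl⟩⟩
      simpa [BlowupModel.evt] using ht
    · rintro v ⟨n, hn, rfl⟩
      have hnlt : (M.evt x n).1 < c / S := lt_of_le_of_lt hn htlt
      have hJ := M.key κ A hκ hA hub S x hS hx hxS n hnlt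
      have hvb := (M.evt_basic x hx n).2.2
      have hpow : (M.αmax : ℝ) ^ (M.J x n) ≤ M.αmax ^ (2 * κ * A) := by
        rw [← Real.rpow_natCast M.αmax (M.J x n)]
        exact Real.rpow_le_rpow_of_exponent_le M.one_lt_αmax.le hJ
      calc (M.evt x n).2 ≤ M.αmax ^ (M.J x n) * x := hvb
        _ ≤ M.αmax ^ (2 * κ * A) * x :=
            mul_le_mul_of_nonneg_right hpow hx.le
        _ ≤ M.αmax ^ (2 * κ * A) * S :=
            mul_le_mul_of_nonneg_left hxS.le (Real.rpow_pos_of_pos hαp _).le
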